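/- arXiv:0810.1997 — 2 statements merged into one kernel-verified Lean document; each statement's English description precedes it below -/
import Mathlib

section
/- Let G be a simple 1-dof Henneberg-I graph with base non-edge (v1, v2) such that u1 and u2 are the only two vertices constructed directly on (v1, v2). Then (u1, u2) is also a base non-edge for G, i.e., G ∪ {(u1,u2)} is a Henneberg-I graph with base edge (u1,u2). -/
open SimpleGraph

variable {α : Type*} [DecidableEq α]

/-- Validity of a Henneberg-I construction sequence (list of steps `(v, u, w)` meaning
`v ◁ (u, w)`) starting from the vertex set `S`. -/
def ValidFrom (S : Finset α) : List (α × α × α) → Prop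
  | [] => True
  | (v, u, w) :: rest => v ∉ S ∧ u ∈ S ∧ w ∈ S ∧ u ≠ w ∧ ValidFrom (insert v S) rest

/-- The vertex set built by a Henneberg-I construction from base edge `(a, b)`. -/
def buildVerts (a b : α) (l : List (α × α × α)) : Finset α :=
  l.foldl (fun s p => insert p.1 s) {a, b}

/-- The edge set built by a Henneberg-I construction from base edge `(a, b)`. -/
def buildEdges (a b : α) (l : List (α × α × α)) : Finset (Sym2 α) :=
  l.foldl (fun s p => insert s(p.1, p.2.1) (insert s(p.1, p.2.2) s)) {s(a, b)}

/-- `(V, E)` is a Henneberg-I graph with base edge `(a, b)`. -/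
def IsHennebergI (V : Finset α) (E : Finset (Sym2 α)) (a b : α) : Prop :=
  a ≠ b ∧ ∃ l, ValidFrom {a, b} l ∧ V = buildVerts a b l ∧ E = buildEdges a b l

/-- `(V, E)` is a simple 1-dof Henneberg-I graph with base non-edge `(a, b)`:
adding back the base edge `(a, b)` gives a Henneberg-I graph with base edge `(a, b)`. -/
def IsSimple1Dof (V : Finset α) (E : Finset (Sym2 α)) (a b : α) : Prop :=
  s(a, b) ∉ E ∧ IsHennebergI V (insert s(a, b) E) a b

/-- `(V', E')` is a subgraph of `(V, E)`. -/
def IsSubgraphOf (V : Finset α) (E : Finset (Sym2 α)) (V' : Finset α)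
    (E' : Finset (Sym2 α)) : Prop :=
  V' ⊆ V ∧ E' ⊆ E ∧ ∀ e ∈ E', ∀ v ∈ e, v ∈ V'

/-- `(V, E)` is wellconstrained (Laman): `|E| = 2|V| - 3` and every subgraph on `m`
vertices has at most `2m - 3` edges. -/
def IsLaman (V : Finset α) (E : Finset (Sym2 α)) : Prop :=
  E.card + 3 = 2 * V.card ∧
  ∀ V' E', IsSubgraphOf V E V' E' → E'.card ≤ 2 * V'.card - 3

/-- The degree of the vertex `x` in the edge set `E`. -/
def degreeIn (E : Finset (Sym2 α)) (x : α) : ℕ := (E.filter (fun e => x ∈ e)).card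

/-- A step `p = (v, u, w)` is constructed directly on the base pair `(a, b)`. -/
def OnBase (a b : α) (p : α × α × α) : Prop :=
  (p.2.1 = a ∧ p.2.2 = b) ∨ (p.2.1 = b ∧ p.2.2 = a)

/-- The 1-path property: exactly one vertex other than `a` and `b` has degree 2. -/
def OnePath (V : Finset α) (E : Finset (Sym2 α)) (a b : α) : Prop :=
  ∃! x, x ∈ V ∧ x ≠ a ∧ x ≠ b ∧ degreeIn E x = 2

/-- Triangle-decomposability of a graph `(V, E)`. -/
inductive TriDecomp : Finset α → Finset (Sym2 α) → Prop
  | edge (u v : α) (h : u ≠ v) : TriDecomp {u, v} {s(u, v)}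
  | triangle (u v w : α) (huv : u ≠ v) (hvw : v ≠ w) (huw : u ≠ w) :
      TriDecomp {u, v, w} {s(u, v), s(v, w), s(u, w)}
  | merge (V1 V2 V3 : Finset α) (E1 E2 E3 : Finset (Sym2 α)) (v1 v2 v3 : α)
      (h12 : v1 ≠ v2) (h23 : v2 ≠ v3) (h13 : v1 ≠ v3)
      (t1 : TriDecomp V1 E1) (t2 : TriDecomp V2 E2) (t3 : TriDecomp V3 E3)
      (i12 : V1 ∩ V2 = {v3}) (i23 : V2 ∩ V3 = {v1}) (i13 : V1 ∩ V3 = {v2})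
      (e12 : E1 ∩ E2 = ∅) (e23 : E2 ∩ E3 = ∅) (e13 : E1 ∩ E3 = ∅) :
      TriDecomp (V1 ∪ V2 ∪ V3) (E1 ∪ E2 ∪ E3)

/-- `H` is a minor of `G`: branch-set definition. -/
def HasMinor {V W : Type*} (G : SimpleGraph V) (H : SimpleGraph W) : Prop :=
  ∃ f : W → Set V,
    (∀ w, (f w).Nonempty) ∧
    (∀ w, (G.induce (f w)).Connected) ∧
    (∀ w w', w ≠ w' → Disjoint (f w) (f w')) ∧
    ∀ w w', H.Adj w w' → ∃ x ∈ f w, ∃ y ∈ f w', G.Adj x y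

/-! Rerooting the construction. The steps building `u1` and `u2` on `(v1, v2)` contribute exactly
the four edges `u_i v_j`, and these are also what one gets by starting from the edge `u1 u2` and
building `v1` and then `v2` on it. After those two steps all of `v1, v2, u1, u2` are present, so
the remaining steps of the original construction can be replayed in their original order. The
result has the same vertices and the same edges, except that `v1 v2` is replaced by `u1 u2`; and
`u1 u2` was not an edge of `G`, since in a construction valid from a set `S` no added edge has
both ends in `S`, which applies to the rerooted one with `S = {u1, u2}`. -/

namespace ValidFrom

variable {S : Finset α} {l : List (α × α × α)}

lemma cons_iff {p : α × α × α} :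
    ValidFrom S (p :: l) ↔
      p.1 ∉ S ∧ p.2.1 ∈ S ∧ p.2.2 ∈ S ∧ p.2.1 ≠ p.2.2 ∧ ValidFrom (insert p.1 S) l :=
  Iff.rfl

lemma fst_notMem (h : ValidFrom S l) {p : α × α × α} (hp : p ∈ l) : p.1 ∉ S := by
  induction l generalizing S with
  | nil => cases hp
  | cons q l ih =>
    rw [cons_iff] at h
    rcases List.mem_cons.mp hp with rfl | hp
    · exact h.1
    · exact fun hpS => ih h.2.2.2.2 hp (Finset.mem_insert_of_mem hpS)

lemma nodup_map_fst (h : ValidFrom S l) : (l.map Prod.fst).Nodup := by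
  induction l generalizing S with
  | nil => exact List.nodup_nil
  | cons q l ih =>
    rw [cons_iff] at h
    refine List.nodup_cons.mpr ⟨?_, ih h.2.2.2.2⟩
    simp only [List.mem_map, not_exists, not_and]
    exact fun p hp hpq => fst_notMem h.2.2.2.2 hp (hpq ▸ Finset.mem_insert_self _ _)

lemma eq_of_fst_eq (h : ValidFrom S l) {p q : α × α × α} (hp : p ∈ l) (hq : q ∈ l)
    (hpq : p.1 = q.1) : p = q :=
  List.inj_on_of_nodup_map h.nodup_map_fst hp hq hpq

lemma filter_fst_notMem (h : ValidFrom S l) (D : Finset α) :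
    ValidFrom (S ∪ D) (l.filter (fun p => p.1 ∉ D)) := by
  induction l generalizing S with
  | nil => trivial
  | cons q l ih =>
    rw [cons_iff] at h
    obtain ⟨hqS, hu, hw, huw, hl⟩ := h
    have hl' := ih hl
    rw [Finset.insert_union] at hl'
    by_cases hqD : q.1 ∈ D
    · rw [List.filter_cons_of_neg (by simpa using hqD)]
      rwa [Finset.insert_eq_of_mem (Finset.mem_union_right _ hqD)] at hl'
    · rw [List.filter_cons_of_pos (by simpa using hqD), cons_iff]
      exact ⟨by simp [hqS, hqD], Finset.mem_union_left _ hu, Finset.mem_union_left _ hw, huw, hl'⟩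

end ValidFrom

def stepEdges (p : α × α × α) : Finset (Sym2 α) := {s(p.1, p.2.1), s(p.1, p.2.2)}

def addedEdges (l : List (α × α × α)) : Finset (Sym2 α) := l.toFinset.biUnion stepEdges

lemma stepEdges_of_onBase {a b : α} {p : α × α × α} (h : OnBase a b p) :
    stepEdges p = {s(p.1, a), s(p.1, b)} := by
  rcases h with ⟨h1, h2⟩ | ⟨h1, h2⟩ <;> simp [stepEdges, h1, h2, Finset.pair_comm]

lemma buildVerts_eq (a b : α) (l : List (α × α × α)) :
    buildVerts a b l = {a, b} ∪ (l.map Prod.fst).toFinset := by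
  suffices ∀ S : Finset α, l.foldl (fun s p => insert p.1 s) S = S ∪ (l.map Prod.fst).toFinset from
    this _
  induction l with
  | nil => simp
  | cons p l ih =>
    intro S
    rw [List.foldl_cons, ih, List.map_cons, List.toFinset_cons, Finset.union_insert,
      Finset.insert_union]

lemma buildEdges_eq (a b : α) (l : List (α × α × α)) :
    buildEdges a b l = insert s(a, b) (addedEdges l) := by
  suffices ∀ E : Finset (Sym2 α),
      l.foldl (fun s p => insert s(p.1, p.2.1) (insert s(p.1, p.2.2) s)) E = E ∪ addedEdges l by
    rw [buildEdges, this, Finset.insert_eq]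
  induction l with
  | nil => simp [addedEdges]
  | cons p l ih =>
    intro E
    rw [List.foldl_cons, ih]
    ext e
    simp only [addedEdges, stepEdges, List.toFinset_cons, Finset.biUnion_insert, Finset.mem_union,
      Finset.mem_insert, Finset.mem_singleton]
    tauto

lemma ValidFrom.mk_notMem_addedEdges {S : Finset α} {l : List (α × α × α)} (h : ValidFrom S l)
    {x y : α} (hx : x ∈ S) (hy : y ∈ S) : s(x, y) ∉ addedEdges l := by
  simp only [addedEdges, stepEdges, Finset.mem_biUnion, List.mem_toFinset, Finset.mem_insert,
    Finset.mem_singleton, not_exists, not_and]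
  intro p hp hxy
  have hpS := h.fst_notMem hp
  rcases hxy with hxy | hxy <;> rcases Sym2.eq_iff.mp hxy with ⟨rfl, -⟩ | ⟨-, rfl⟩ <;> contradiction

lemma addedEdges_filter_union_filter_not (l : List (α × α × α)) (P : α × α × α → Prop)
    [DecidablePred P] :
    addedEdges (l.filter (fun p => P p)) ∪ addedEdges (l.filter (fun p => ¬P p)) =
      addedEdges l := by
  simp only [addedEdges, List.toFinset_filter, decide_eq_true_eq, ← Finset.union_biUnion,
    Finset.filter_union_filter_not_eq]

lemma ValidFrom.addedEdges_filter_fst_mem_pair {S : Finset α} {l : List (α × α × α)}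
    (h : ValidFrom S l) {p q : α × α × α} (hp : p ∈ l) (hq : q ∈ l) :
    addedEdges (l.filter (fun r => r.1 ∈ ({p.1, q.1} : Finset α))) = stepEdges p ∪ stepEdges q := by
  suffices (l.filter (fun r => r.1 ∈ ({p.1, q.1} : Finset α))).toFinset = {p, q} by
    rw [addedEdges, this, Finset.biUnion_insert, Finset.singleton_biUnion]
  ext r
  simp only [List.toFinset_filter, decide_eq_true_eq, Finset.mem_filter, List.mem_toFinset,
    Finset.mem_insert, Finset.mem_singleton]
  constructor
  · rintro ⟨hr, hrp | hrq⟩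
    · exact Or.inl (h.eq_of_fst_eq hr hp hrp)
    · exact Or.inr (h.eq_of_fst_eq hr hq hrq)
  · rintro (rfl | rfl) <;> simp [hp, hq]

section Reroot

variable {a b c d : α} {l : List (α × α × α)}

def reroot (a b c d : α) (l : List (α × α × α)) : List (α × α × α) :=
  (a, c, d) :: (b, c, d) :: l.filter (fun p => p.1 ∉ ({c, d} : Finset α))

lemma validFrom_reroot (hab : a ≠ b) (hcd : c ≠ d) (hl : ValidFrom {a, b} l)
    (hc : c ∉ ({a, b} : Finset α)) (hd : d ∉ ({a, b} : Finset α)) :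
    ValidFrom {c, d} (reroot a b c d l) := by
  simp only [Finset.mem_insert, Finset.mem_singleton, not_or] at hc hd
  have hstart : insert b (insert a {c, d}) = ({a, b} ∪ {c, d} : Finset α) := by
    ext x; simp only [Finset.mem_insert, Finset.mem_union, Finset.mem_singleton]; tauto
  rw [reroot, ValidFrom.cons_iff, ValidFrom.cons_iff]
  dsimp only
  rw [hstart]
  refine ⟨?_, by simp, by simp, hcd, ?_, by simp, by simp, hcd, hl.filter_fst_notMem _⟩
  · simp only [Finset.mem_insert, Finset.mem_singleton]
    rintro (rfl | rfl) <;> simp_all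
  · simp only [Finset.mem_insert, Finset.mem_singleton]
    rintro (rfl | rfl | rfl) <;> simp_all

lemma buildVerts_reroot (hc : c ∈ l.map Prod.fst) (hd : d ∈ l.map Prod.fst) :
    buildVerts c d (reroot a b c d l) = buildVerts a b l := by
  ext x
  simp only [buildVerts_eq, reroot, List.map_cons, List.toFinset_cons, Finset.mem_union,
    Finset.mem_insert, Finset.mem_singleton, List.mem_toFinset, List.mem_map, List.mem_filter,
    decide_eq_true_eq] at hc hd ⊢
  grind

lemma addedEdges_reroot (hl : ValidFrom {a, b} l) (hc : ∃ p ∈ l, p.1 = c ∧ OnBase a b p)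
    (hd : ∃ q ∈ l, q.1 = d ∧ OnBase a b q) :
    addedEdges (reroot a b c d l) = addedEdges l := by
  obtain ⟨p, hp, rfl, hpab⟩ := hc
  obtain ⟨q, hq, rfl, hqab⟩ := hd
  rw [← addedEdges_filter_union_filter_not l (fun r => r.1 ∈ ({p.1, q.1} : Finset α))]
  rw [hl.addedEdges_filter_fst_mem_pair hp hq, stepEdges_of_onBase hpab, stepEdges_of_onBase hqab]
  simp only [reroot, addedEdges, List.toFinset_cons, Finset.biUnion_insert, stepEdges]
  rw [← Finset.union_assoc]
  congr 1
  ext e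
  simp only [Finset.mem_union, Finset.mem_insert, Finset.mem_singleton, Sym2.eq_swap (a := a),
    Sym2.eq_swap (a := b)]
  tauto

theorem isSimple1Dof_of_onBase (hab : a ≠ b) (hl : ValidFrom {a, b} l) (hcd : c ≠ d)
    (hc : ∃ p ∈ l, p.1 = c ∧ OnBase a b p) (hd : ∃ q ∈ l, q.1 = d ∧ OnBase a b q) :
    IsSimple1Dof (buildVerts a b l) ((buildEdges a b l).erase s(a, b)) c d := by
  have hc_fst : c ∈ l.map Prod.fst := by
    obtain ⟨p, hp, rfl, -⟩ := hc
    exact List.mem_map_of_mem hp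
  have hd_fst : d ∈ l.map Prod.fst := by
    obtain ⟨q, hq, rfl, -⟩ := hd
    exact List.mem_map_of_mem hq
  have hc_base : c ∉ ({a, b} : Finset α) := by
    obtain ⟨p, hp, rfl, -⟩ := hc
    exact hl.fst_notMem hp
  have hd_base : d ∉ ({a, b} : Finset α) := by
    obtain ⟨q, hq, rfl, -⟩ := hd
    exact hl.fst_notMem hq
  have hvalid := validFrom_reroot hab hcd hl hc_base hd_base
  have hedges := addedEdges_reroot hl hc hd
  rw [buildEdges_eq, Finset.erase_insert (hl.mk_notMem_addedEdges (by simp) (by simp))]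
  refine ⟨?_, hcd, reroot a b c d l, hvalid, (buildVerts_reroot hc_fst hd_fst).symm, ?_⟩
  · rw [← hedges]
    exact hvalid.mk_notMem_addedEdges (by simp) (by simp)
  · rw [buildEdges_eq, hedges]

end Reroot

theorem stmt14_general (v1 v2 : α) (hab : v1 ≠ v2) (l : List (α × α × α))
    (hl : ValidFrom {v1, v2} l)
    (V : Finset α) (E : Finset (Sym2 α))
    (hV : V = buildVerts v1 v2 l) (hE : E = (buildEdges v1 v2 l).erase s(v1, v2))
    (u1 u2 : α) (hu : u1 ≠ u2)
    (hu1 : ∃ p ∈ l, p.1 = u1 ∧ OnBase v1 v2 p)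
    (hu2 : ∃ p ∈ l, p.1 = u2 ∧ OnBase v1 v2 p) :
    IsSimple1Dof V E u1 u2 := by
  subst hV hE
  exact isSimple1Dof_of_onBase hab hl hu hu1 hu2

/-- If `u1` and `u2` are the only two vertices constructed directly on the
base pair `(v1, v2)`, then `(u1, u2)` is also a base non-edge for `G`, i.e.
`G ∪ {(u1, u2)}` is a Henneberg-I graph with base edge `(u1, u2)`. -/
theorem stmt14 (v1 v2 : α) (hab : v1 ≠ v2) (l : List (α × α × α))
    (hl : ValidFrom {v1, v2} l)
    (V : Finset α) (E : Finset (Sym2 α))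
    (hV : V = buildVerts v1 v2 l) (hE : E = (buildEdges v1 v2 l).erase s(v1, v2))
    (u1 u2 : α) (hu : u1 ≠ u2)
    (hu1 : ∃ p ∈ l, p.1 = u1 ∧ OnBase v1 v2 p)
    (hu2 : ∃ p ∈ l, p.1 = u2 ∧ OnBase v1 v2 p)
    (honly : ∀ p ∈ l, OnBase v1 v2 p → p.1 = u1 ∨ p.1 = u2) :
    IsSimple1Dof V E u1 u2 :=
  stmt14_general v1 v2 hab l hl V E hV hE u1 u2 hu hu1 hu2
end

section
/- For every m ≥ 1 there exists a Henneberg-I graph with a designated base edge such that the complete graph K_m is a minor of it, and the graph has the 1-path property (exactly one vertex other than the base-edge endpoints has degree 2). -/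
/-!
Start from the base edge `01` and add rows `R_0, …, R_n`, row `p` being the path
`(p,0), …, (p,p)`: the vertex `(p,0)` is attached to `0` and `1`, and `(p,q+1)` to `(p,q)` and to
the last vertex `(q,q)` of row `q`. Contracting every row leaves a `K_{n+3}` on the branch sets
`{0}, {1}, R_0, …, R_n`: for `p < p'` the edge from `(p',p+1)` to `(p,p)` joins `R_{p'}` to `R_p`.
Every vertex other than `(n,n)` later receives a third neighbour, `(p,q+1)` or `(p+1,p+1)`,
while `(n,n)` is added last and keeps degree 2.
-/

open SimpleGraph

variable {α : Type*} [DecidableEq α]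

theorem mem_buildVerts {a b x : α} {l : List (α × α × α)} :
    x ∈ buildVerts a b l ↔ x = a ∨ x = b ∨ x ∈ l.map Prod.fst := by
  suffices ∀ s : Finset α, x ∈ l.foldl (fun s p => insert p.1 s) s ↔ x ∈ s ∨ x ∈ l.map Prod.fst by
    simp [buildVerts, this, or_assoc]
  induction l with
  | nil => simp
  | cons p l ih => intro s; simp [ih, or_assoc, or_left_comm]

theorem mem_buildEdges {a b : α} {e : Sym2 α} {l : List (α × α × α)} :
    e ∈ buildEdges a b l ↔ e = s(a, b) ∨ ∃ p ∈ l, e = s(p.1, p.2.1) ∨ e = s(p.1, p.2.2) := by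
  suffices ∀ s : Finset (Sym2 α),
      e ∈ l.foldl (fun s p => insert s(p.1, p.2.1) (insert s(p.1, p.2.2) s)) s ↔
        e ∈ s ∨ ∃ p ∈ l, e = s(p.1, p.2.1) ∨ e = s(p.1, p.2.2) by
    simp [buildEdges, this]
  induction l with
  | nil => simp
  | cons p l ih =>
    intro s
    simp only [List.foldl_cons, ih, Finset.mem_insert, List.mem_cons, or_and_right, exists_or,
      exists_eq_left]
    grind

theorem validFrom_of_sorted {β : Type*} [LinearOrder β] {S : Finset β} {l : List (β × β × β)}
    (hsorted : (l.map Prod.fst).Pairwise (· < ·)) (hS : ∀ x ∈ S, ∀ p ∈ l, x < p.1)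
    (hne : ∀ p ∈ l, p.2.1 ≠ p.2.2)
    (hanchor : ∀ p ∈ l, ∀ y ∈ [p.2.1, p.2.2], y < p.1 ∧ (y ∈ S ∨ y ∈ l.map Prod.fst)) :
    ValidFrom S l := by
  induction l generalizing S with
  | nil => trivial
  | cons p l ih =>
    obtain ⟨v, u, w⟩ := p
    simp only [List.map_cons, List.pairwise_cons, List.mem_map] at hsorted
    have mem_S : ∀ y ∈ [u, w], y ∈ S := by
      intro y hy
      obtain ⟨hyv, hy | hy⟩ := hanchor _ List.mem_cons_self y hy
      · exact hy
      · simp only [List.map_cons, List.mem_cons, List.mem_map] at hy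
        rcases hy with rfl | ⟨r, hr, rfl⟩
        · exact absurd hyv (lt_irrefl _)
        · exact absurd (hsorted.1 _ ⟨r, hr, rfl⟩) hyv.not_gt
    refine ⟨fun hv => lt_irrefl v (hS v hv _ List.mem_cons_self), mem_S u (by simp),
      mem_S w (by simp), hne _ List.mem_cons_self, ih hsorted.2 ?_ ?_ ?_⟩
    · intro x hx r hr
      rcases Finset.mem_insert.mp hx with rfl | hx
      · exact hsorted.1 _ ⟨r, hr, rfl⟩
      · exact hS x hx r (List.mem_cons_of_mem _ hr)
    · exact fun r hr => hne r (List.mem_cons_of_mem _ hr)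
    · intro r hr y hy
      obtain ⟨hyr, hy⟩ := hanchor r (List.mem_cons_of_mem _ hr) y hy
      simp only [List.map_cons, List.mem_cons] at hy
      exact ⟨hyr, by simp only [Finset.mem_insert]; tauto⟩

theorem three_le_degreeIn {E : Finset (Sym2 α)} {x a b c : α}
    (ha : s(x, a) ∈ E) (hb : s(x, b) ∈ E) (hc : s(x, c) ∈ E)
    (hab : a ≠ b) (hac : a ≠ c) (hbc : b ≠ c) : 3 ≤ degreeIn E x := by
  have hsub : {s(x, a), s(x, b), s(x, c)} ⊆ {e ∈ E | x ∈ e} := by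
    simp [Finset.insert_subset_iff, ha, hb, hc]
  have ha_notMem : s(x, a) ∉ ({s(x, b), s(x, c)} : Finset (Sym2 α)) := by
    simp only [Finset.mem_insert, Finset.mem_singleton, Sym2.congr_right]
    tauto
  refine le_of_eq_of_le ?_ (Finset.card_le_card hsub)
  rw [Finset.card_insert_of_notMem ha_notMem, Finset.card_pair (by rwa [Ne, Sym2.congr_right])]

theorem degreeIn_eq_two {E : Finset (Sym2 α)} {x a b : α} (hab : a ≠ b)
    (hE : {e ∈ E | x ∈ e} = {s(x, a), s(x, b)}) : degreeIn E x = 2 := by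
  rw [degreeIn, hE, Finset.card_pair (by rwa [Ne, Sym2.congr_right])]

theorem HasMinor.of_embedding {V W W' : Type*} {G : SimpleGraph V} {H : SimpleGraph W}
    {H' : SimpleGraph W'} (h : HasMinor G H) (φ : H' ↪g H) : HasMinor G H' := by
  obtain ⟨f, hne, hconn, hdisj, hadj⟩ := h
  exact ⟨f ∘ φ, fun _ => hne _, fun _ => hconn _, fun _ _ h => hdisj _ _ (φ.injective.ne h),
    fun _ _ h => hadj _ _ (φ.map_rel_iff.mpr h)⟩

theorem SimpleGraph.connected_induce_image_Iic {V : Type*} {G : SimpleGraph V} {f : ℕ → V}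
    {k : ℕ} (h : ∀ i < k, G.Adj (f i) (f (i + 1))) : (G.induce (f '' Set.Iic k)).Connected := by
  have connected_singleton : ∀ x, (G.induce {x}).Connected := fun x => by simp
  induction k with
  | zero =>
    rw [show Set.Iic 0 = {0} from Set.Iic_bot, Set.image_singleton]
    exact connected_singleton _
  | succ k ih =>
    have hk : f '' Set.Iic (k + 1) = f '' Set.Iic k ∪ {f (k + 1)} := by
      rw [← Order.succ_eq_add_one, Order.Iic_succ, Set.image_insert_eq, Set.union_singleton]
    rw [hk]
    exact connected_induce_union (ih fun i hi => h i (Nat.lt_succ_of_lt hi)).preconnected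
      (connected_singleton _).preconnected ⟨k, Set.self_mem_Iic, rfl⟩ rfl (h k k.lt_succ_self)

namespace Staircase

-- The vertex `(p, q)`, `q ≤ p`: lexicographically increasing, and never a base vertex `0`, `1`.
def cell (p q : ℕ) : ℕ := p * (p + 1) + q + 2

def leftAnchor (p : ℕ) : ℕ → ℕ
  | 0 => 0
  | q + 1 => cell p q

def diagAnchor : ℕ → ℕ
  | 0 => 1
  | q + 1 => cell q q

def step (p q : ℕ) : ℕ × ℕ × ℕ := (cell p q, leftAnchor p q, diagAnchor q)

def steps (n : ℕ) : List (ℕ × ℕ × ℕ) :=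
  (List.range (n + 1)).flatMap fun p => (List.range (p + 1)).map (step p)

def verts (n : ℕ) : Finset ℕ := buildVerts 0 1 (steps n)

def edges (n : ℕ) : Finset (Sym2 ℕ) := buildEdges 0 1 (steps n)

theorem two_le_cell (p q : ℕ) : 2 ≤ cell p q := by
  unfold cell; omega

theorem cell_lt_cell_of_lt_right {p q q' : ℕ} (h : q < q') : cell p q < cell p q' := by
  unfold cell; omega

theorem cell_lt_cell_of_lt_left {p p' q q' : ℕ} (hq : q ≤ p) (h : p < p') :
    cell p q < cell p' q' := by
  unfold cell; nlinarith

theorem cell_inj {p p' q q' : ℕ} (hq : q ≤ p) (hq' : q' ≤ p') :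
    cell p q = cell p' q' ↔ p = p' ∧ q = q' := by
  refine ⟨fun h => ?_, by rintro ⟨rfl, rfl⟩; rfl⟩
  rcases lt_trichotomy p p' with hp | rfl | hp
  · exact absurd h (cell_lt_cell_of_lt_left hq hp).ne
  · exact ⟨rfl, by unfold cell at h; omega⟩
  · exact absurd h (cell_lt_cell_of_lt_left hq' hp).ne'

theorem cell_le_cell {n p q : ℕ} (hp : p ≤ n) (hq : q ≤ p) : cell p q ≤ cell n n := by
  rcases hp.lt_or_eq with hp | rfl
  · exact (cell_lt_cell_of_lt_left hq hp).le
  · unfold cell; omega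

theorem leftAnchor_lt_cell (p q : ℕ) : leftAnchor p q < cell p q := by
  cases q with
  | zero => exact (two_le_cell p 0).trans_lt' two_pos
  | succ q => exact cell_lt_cell_of_lt_right q.lt_succ_self

theorem diagAnchor_lt_cell {p q : ℕ} (hq : q ≤ p) : diagAnchor q < cell p q := by
  cases q with
  | zero => exact (two_le_cell p 0).trans_lt' one_lt_two
  | succ q => exact cell_lt_cell_of_lt_left le_rfl (Nat.succ_le_iff.mp hq)

theorem leftAnchor_ne_diagAnchor {p q : ℕ} (hq : q ≤ p) : leftAnchor p q ≠ diagAnchor q := by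
  cases q with
  | zero => exact zero_ne_one
  | succ q => exact (cell_lt_cell_of_lt_left le_rfl (Nat.succ_le_iff.mp hq)).ne'

theorem mem_steps {n : ℕ} {s : ℕ × ℕ × ℕ} :
    s ∈ steps n ↔ ∃ p ≤ n, ∃ q ≤ p, step p q = s := by
  simp [steps]

theorem steps_map_fst_sorted (n : ℕ) : ((steps n).map Prod.fst).Pairwise (· < ·) := by
  simp only [steps, List.map_flatMap, List.map_map, List.pairwise_flatMap]
  refine ⟨fun p _ => (List.pairwise_lt_range).map _ fun _ _ => cell_lt_cell_of_lt_right, ?_⟩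
  refine List.pairwise_lt_range.imp_of_mem fun {p p'} _ _ hp x hx y hy => ?_
  simp only [List.mem_map, List.mem_range, Function.comp_apply] at hx hy
  obtain ⟨q, hq, rfl⟩ := hx
  obtain ⟨q', -, rfl⟩ := hy
  exact cell_lt_cell_of_lt_left (Nat.lt_succ_iff.mp hq) hp

theorem validFrom_steps (n : ℕ) : ValidFrom {0, 1} (steps n) := by
  refine validFrom_of_sorted (steps_map_fst_sorted n) ?_ ?_ ?_
  · intro x hx s hs
    obtain ⟨p, -, q, -, rfl⟩ := mem_steps.mp hs
    have := two_le_cell p q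
    simp only [Finset.mem_insert, Finset.mem_singleton] at hx
    exact lt_of_lt_of_le (by omega) this
  · rintro s hs
    obtain ⟨p, -, q, hq, rfl⟩ := mem_steps.mp hs
    exact leftAnchor_ne_diagAnchor hq
  · rintro s hs y hy
    obtain ⟨p, hp, q, hq, rfl⟩ := mem_steps.mp hs
    have cell_mem : ∀ p' ≤ n, ∀ q' ≤ p', cell p' q' ∈ (steps n).map Prod.fst :=
      fun p' hp' q' hq' => List.mem_map.mpr ⟨_, mem_steps.mpr ⟨p', hp', q', hq', rfl⟩, rfl⟩
    simp only [List.mem_cons, List.not_mem_nil, or_false] at hy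
    rcases hy with rfl | rfl
    · refine ⟨leftAnchor_lt_cell p q, ?_⟩
      cases q with
      | zero => simp [step, leftAnchor]
      | succ q => exact Or.inr (cell_mem p hp q (by omega))
    · refine ⟨diagAnchor_lt_cell hq, ?_⟩
      cases q with
      | zero => simp [step, diagAnchor]
      | succ q => exact Or.inr (cell_mem q (by omega) q le_rfl)

theorem isHennebergI (n : ℕ) : IsHennebergI (verts n) (edges n) 0 1 :=
  ⟨zero_ne_one, steps n, validFrom_steps n, rfl, rfl⟩

theorem mem_verts {n x : ℕ} : x ∈ verts n ↔ x = 0 ∨ x = 1 ∨ ∃ p ≤ n, ∃ q ≤ p, cell p q = x := by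
  simp only [verts, mem_buildVerts, List.mem_map, mem_steps]
  aesop

theorem mem_edges {n : ℕ} {e : Sym2 ℕ} :
    e ∈ edges n ↔ e = s(0, 1) ∨ ∃ p ≤ n, ∃ q ≤ p,
      e = s(cell p q, leftAnchor p q) ∨ e = s(cell p q, diagAnchor q) := by
  rw [edges, mem_buildEdges]
  constructor
  · rintro (rfl | ⟨s, hs, he⟩)
    · exact Or.inl rfl
    · obtain ⟨p, hp, q, hq, rfl⟩ := mem_steps.mp hs
      exact Or.inr ⟨p, hp, q, hq, he⟩
  · rintro (rfl | ⟨p, hp, q, hq, he⟩)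
    · exact Or.inl rfl
    · exact Or.inr ⟨_, mem_steps.mpr ⟨p, hp, q, hq, rfl⟩, he⟩

theorem cell_leftAnchor_mem_edges {n p q : ℕ} (hp : p ≤ n) (hq : q ≤ p) :
    s(cell p q, leftAnchor p q) ∈ edges n :=
  mem_edges.mpr (Or.inr ⟨p, hp, q, hq, Or.inl rfl⟩)

theorem cell_diagAnchor_mem_edges {n p q : ℕ} (hp : p ≤ n) (hq : q ≤ p) :
    s(cell p q, diagAnchor q) ∈ edges n :=
  mem_edges.mpr (Or.inr ⟨p, hp, q, hq, Or.inr rfl⟩)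

theorem degreeIn_edges_cell_last (n : ℕ) : degreeIn (edges n) (cell n n) = 2 := by
  refine degreeIn_eq_two (leftAnchor_ne_diagAnchor (le_refl n)) ?_
  -- each edge joins a cell to a smaller anchor, and `cell n n` is the largest cell
  have last_mem : ∀ {p q a}, p ≤ n → q ≤ p → a < cell p q → cell n n ∈ s(cell p q, a) →
      p = n ∧ q = n := by
    intro p q a hp hq ha h
    rcases Sym2.mem_iff.mp h with h | rfl
    · exact (cell_inj hq le_rfl).mp h.symm
    · exact absurd (cell_le_cell hp hq) ha.not_ge
  ext e
  simp only [Finset.mem_filter, Finset.mem_insert, Finset.mem_singleton]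
  constructor
  · rintro ⟨he, hT⟩
    rcases mem_edges.mp he with rfl | ⟨p, hp, q, hq, rfl | rfl⟩
    · have := two_le_cell n n
      simp only [Sym2.mem_iff] at hT
      omega
    · obtain ⟨rfl, rfl⟩ := last_mem hp hq (leftAnchor_lt_cell p q) hT
      exact Or.inl rfl
    · obtain ⟨rfl, rfl⟩ := last_mem hp hq (diagAnchor_lt_cell hq) hT
      exact Or.inr rfl
  · rintro (rfl | rfl)
    · exact ⟨cell_leftAnchor_mem_edges le_rfl le_rfl, Sym2.mem_mk_left _ _⟩
    · exact ⟨cell_diagAnchor_mem_edges le_rfl le_rfl, Sym2.mem_mk_left _ _⟩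

theorem three_le_degreeIn_edges_cell {n p q : ℕ} (hp : p ≤ n) (hq : q ≤ p)
    (hlast : cell p q ≠ cell n n) : 3 ≤ degreeIn (edges n) (cell p q) := by
  obtain ⟨y, hy, hyE⟩ : ∃ y, cell p q < y ∧ s(cell p q, y) ∈ edges n := by
    rcases hq.lt_or_eq with hq | rfl
    · refine ⟨cell p (q + 1), cell_lt_cell_of_lt_right q.lt_succ_self, ?_⟩
      rw [Sym2.eq_swap]
      exact cell_leftAnchor_mem_edges hp hq
    · have hqn : q < n := hp.lt_of_ne (by rintro rfl; exact hlast rfl)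
      refine ⟨cell (q + 1) (q + 1), cell_lt_cell_of_lt_left le_rfl q.lt_succ_self, ?_⟩
      rw [Sym2.eq_swap]
      exact cell_diagAnchor_mem_edges hqn le_rfl
  exact three_le_degreeIn (cell_leftAnchor_mem_edges hp hq) (cell_diagAnchor_mem_edges hp hq) hyE
    (leftAnchor_ne_diagAnchor hq) ((leftAnchor_lt_cell p q).trans hy).ne
    ((diagAnchor_lt_cell hq).trans hy).ne

theorem onePath (n : ℕ) : OnePath (verts n) (edges n) 0 1 := by
  have := two_le_cell n n
  refine ⟨cell n n, ⟨mem_verts.mpr (Or.inr (Or.inr ⟨n, le_rfl, n, le_rfl, rfl⟩)), by omega,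
    by omega, degreeIn_edges_cell_last n⟩, ?_⟩
  rintro x ⟨hx, hx0, hx1, hdeg⟩
  obtain rfl | rfl | ⟨p, hp, q, hq, rfl⟩ := mem_verts.mp hx
  · exact absurd rfl hx0
  · exact absurd rfl hx1
  · by_contra hlast
    have := three_le_degreeIn_edges_cell hp hq hlast
    omega

def graph (n : ℕ) : SimpleGraph ℕ := fromEdgeSet (edges n : Set (Sym2 ℕ))

theorem cell_adj_leftAnchor {n p q : ℕ} (hp : p ≤ n) (hq : q ≤ p) :
    (graph n).Adj (cell p q) (leftAnchor p q) :=
  (fromEdgeSet_adj _).mpr ⟨cell_leftAnchor_mem_edges hp hq, (leftAnchor_lt_cell p q).ne'⟩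

theorem cell_adj_diagAnchor {n p q : ℕ} (hp : p ≤ n) (hq : q ≤ p) :
    (graph n).Adj (cell p q) (diagAnchor q) :=
  (fromEdgeSet_adj _).mpr ⟨cell_diagAnchor_mem_edges hp hq, (diagAnchor_lt_cell hq).ne'⟩

def row (p : ℕ) : Set ℕ := cell p '' Set.Iic p

theorem connected_induce_row {n p : ℕ} (hp : p ≤ n) : ((graph n).induce (row p)).Connected :=
  connected_induce_image_Iic fun _ hq => (cell_adj_leftAnchor hp hq).symm

def branchSet : ℕ → Set ℕ
  | 0 => {0}
  | 1 => {1}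
  | p + 2 => row p

theorem eq_of_mem_branchSet {i j x : ℕ} (hi : x ∈ branchSet i) (hj : x ∈ branchSet j) :
    i = j := by
  rcases i with _ | _ | p <;> rcases j with _ | _ | p' <;>
    simp only [branchSet, row, Set.mem_singleton_iff, Set.mem_image, Set.mem_Iic] at hi hj
  all_goals grind [two_le_cell, cell_inj]

theorem exists_adj_branchSet {n i j : ℕ} (hij : i < j) (hj : j < n + 3) :
    ∃ x ∈ branchSet i, ∃ y ∈ branchSet j, (graph n).Adj x y := by
  match i, j, hij, hj with
  | 0, 1, _, _ =>
    exact ⟨0, rfl, 1, rfl, (fromEdgeSet_adj _).mpr ⟨mem_edges.mpr (Or.inl rfl), zero_ne_one⟩⟩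
  | 0, p + 2, _, hj =>
    exact ⟨0, rfl, cell p 0, ⟨0, Nat.zero_le _, rfl⟩,
      (cell_adj_leftAnchor (by omega) (Nat.zero_le _)).symm⟩
  | 1, p + 2, _, hj =>
    exact ⟨1, rfl, cell p 0, ⟨0, Nat.zero_le _, rfl⟩,
      (cell_adj_diagAnchor (by omega) (Nat.zero_le _)).symm⟩
  | p + 2, p' + 2, h, hj =>
    exact ⟨cell p p, ⟨p, Set.self_mem_Iic, rfl⟩,
      cell p' (p + 1), ⟨p + 1, Set.mem_Iic.mpr (by omega), rfl⟩,
      (cell_adj_diagAnchor (q := p + 1) (by omega) (by omega)).symm⟩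
  | _ + 1, 1, h, _ => omega

theorem branchSet_nonempty (i : ℕ) : (branchSet i).Nonempty := by
  rcases i with _ | _ | p
  exacts [⟨0, rfl⟩, ⟨1, rfl⟩, ⟨cell p 0, 0, Nat.zero_le _, rfl⟩]

theorem connected_induce_branchSet {n i : ℕ} (hi : i < n + 3) :
    ((graph n).induce (branchSet i)).Connected := by
  rcases i with _ | _ | p
  · simp [branchSet]
  · simp [branchSet]
  · exact connected_induce_row (by omega)

theorem hasMinor_completeGraph (n : ℕ) : HasMinor (graph n) (completeGraph (Fin (n + 3))) := by
  refine ⟨fun i => branchSet i, fun i => branchSet_nonempty i,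
    fun i => connected_induce_branchSet i.isLt, fun i j hij => ?_, fun i j hij => ?_⟩
  · exact Set.disjoint_left.mpr fun x hi hj => hij (Fin.ext (eq_of_mem_branchSet hi hj))
  · rcases lt_or_gt_of_ne (Fin.val_ne_of_ne hij) with h | h
    · exact exists_adj_branchSet h j.isLt
    · obtain ⟨x, hx, y, hy, hxy⟩ := exists_adj_branchSet h i.isLt
      exact ⟨y, hy, x, hx, hxy.symm⟩

end Staircase

theorem stmt15_general (m : ℕ) :
    ∃ (V : Finset ℕ) (E : Finset (Sym2 ℕ)) (a b : ℕ),
      IsHennebergI V E a b ∧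
      (∃! x, x ∈ V ∧ x ≠ a ∧ x ≠ b ∧ degreeIn E x = 2) ∧
      HasMinor (SimpleGraph.fromEdgeSet (E : Set (Sym2 ℕ)))
        (completeGraph (Fin m)) :=
  ⟨Staircase.verts m, Staircase.edges m, 0, 1, Staircase.isHennebergI m, Staircase.onePath m,
    (Staircase.hasMinor_completeGraph m).of_embedding
      (Embedding.completeGraph (Fin.castLEEmb (by omega)))⟩

/-- For every `m ≥ 1` there exists a Henneberg-I graph with a designated
base edge that has the complete graph `K_m` as a minor and has the 1-path property
(exactly one vertex other than the base-edge endpoints has degree 2). -/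
theorem stmt15 (m : ℕ) (hm : 1 ≤ m) :
    ∃ (V : Finset ℕ) (E : Finset (Sym2 ℕ)) (a b : ℕ),
      IsHennebergI V E a b ∧
      (∃! x, x ∈ V ∧ x ≠ a ∧ x ≠ b ∧ degreeIn E x = 2) ∧
      HasMinor (SimpleGraph.fromEdgeSet (E : Set (Sym2 ℕ)))
        (completeGraph (Fin m)) :=
  stmt15_general m
end
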